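/- For the standard β-Hölder triangle T_β = {(x,y) ∈ ℝ² : 0 ≤ x ≤ 1, 0 ≤ y ≤ x^β} with β ≥ 1, and any two points p = (x₁,y₁), q = (x₂,y₂) in T_β, the inner distance (infimum of lengths of rectifiable paths in T_β joining p and q) is at most C·‖p - q‖ for some constant C depending only on β. In particular T_β is Lipschitz normally embedded. -/

import Mathlib

/-!
The map `(x, y) ↦ (x, min y (x ^ β))` retracts the convex strip `[0,1] × [0,∞)` onto `T_β`, and
it is `β`-Lipschitz there because `x ↦ x ^ β` is `β`-Lipschitz on `[0,1]` when `β ≥ 1`. Retracting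
the segment from `p` to `q` gives a path in `T_β` of length at most `β * dist p q`.
-/

open Set

/-- The standard β-Hölder triangle `T_β = {(x,y) : 0 ≤ x ≤ 1, 0 ≤ y ≤ x^β}`. -/
def holderTriangle (β : ℝ) : Set (ℝ × ℝ) :=
  {p | 0 ≤ p.1 ∧ p.1 ≤ 1 ∧ 0 ≤ p.2 ∧ p.2 ≤ p.1 ^ β}

/-- Inner distance in a subset `S`: the infimum of the lengths (total variations) of
continuous paths in `S` joining `p` and `q`. -/
noncomputable def innerDist (S : Set (ℝ × ℝ)) (p q : ℝ × ℝ) : ENNReal :=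
  ⨅ (γ : ℝ → ℝ × ℝ) (_ : ContinuousOn γ (Set.Icc 0 1))
    (_ : Set.MapsTo γ (Set.Icc 0 1) S) (_ : γ 0 = p) (_ : γ 1 = q),
      eVariationOn γ (Set.Icc 0 1)

open scoped ENNReal NNReal

lemma innerDist_le_eVariationOn {S : Set (ℝ × ℝ)} {γ : ℝ → ℝ × ℝ}
    (hγ : ContinuousOn γ (Icc 0 1)) (hγS : MapsTo γ (Icc 0 1) S) :
    innerDist S (γ 0) (γ 1) ≤ eVariationOn γ (Icc 0 1) :=
  iInf_le_of_le γ <| iInf_le_of_le hγ <| iInf_le_of_le hγS <| iInf_le_of_le rfl <| iInf_le _ rfl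

lemma LipschitzOnWith.eVariationOn_Icc_zero_one_le {E : Type*} [PseudoEMetricSpace E]
    {f : ℝ → E} {K : ℝ≥0} (hf : LipschitzOnWith K f (Icc 0 1)) :
    eVariationOn f (Icc 0 1) ≤ K := by
  have hid : eVariationOn id (Icc (0 : ℝ) 1) = 1 := by simp
  have := hf.comp_eVariationOn_le (g := id) (mapsTo_id _)
  rwa [Function.comp_id, hid, mul_one] at this

lemma innerDist_le_of_lipschitzOnWith_retraction {S K : Set (ℝ × ℝ)} {r : ℝ × ℝ → ℝ × ℝ}
    {C : ℝ≥0} (hK : Convex ℝ K) (hSK : S ⊆ K) (hr : LipschitzOnWith C r K)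
    (hrK : MapsTo r K S) (hrS : EqOn r id S) {p q : ℝ × ℝ} (hp : p ∈ S) (hq : q ∈ S) :
    innerDist S p q ≤ C * edist p q := by
  set γ : ℝ → ℝ × ℝ := r ∘ AffineMap.lineMap p q
  have hsegment : MapsTo (AffineMap.lineMap p q) (Icc (0 : ℝ) 1) K := by
    rintro t ht
    exact hK.segment_subset (hSK hp) (hSK hq)
      ((segment_eq_image_lineMap ℝ p q).symm ▸ mem_image_of_mem _ ht)
  have hγ : LipschitzOnWith (C * nndist p q) γ (Icc 0 1) :=
    hr.comp (lipschitzWith_lineMap p q).lipschitzOnWith hsegment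
  have hγ0 : γ 0 = p := by simpa [γ] using hrS hp
  have hγ1 : γ 1 = q := by simpa [γ] using hrS hq
  calc innerDist S p q = innerDist S (γ 0) (γ 1) := by rw [hγ0, hγ1]
    _ ≤ eVariationOn γ (Icc 0 1) := innerDist_le_eVariationOn hγ.continuousOn (hrK.comp hsegment)
    _ ≤ C * edist p q := by
      simpa only [ENNReal.coe_mul, edist_nndist] using hγ.eVariationOn_Icc_zero_one_le

lemma lipschitzOnWith_rpow_Icc_zero_one {β : ℝ} (hβ : 1 ≤ β) :
    LipschitzOnWith β.toNNReal (fun x : ℝ => x ^ β) (Icc 0 1) := by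
  refine (convex_Icc 0 1).lipschitzOnWith_of_nnnorm_hasDerivWithin_le
    (fun x _ => (Real.hasDerivAt_rpow_const (Or.inr hβ)).hasDerivWithinAt) fun x hx => ?_
  have hpow : x ^ (β - 1) ≤ 1 := Real.rpow_le_one hx.1 hx.2 (by linarith)
  rw [← NNReal.coe_le_coe, coe_nnnorm, Real.norm_eq_abs, Real.coe_toNNReal _ (by linarith),
    abs_of_nonneg (mul_nonneg (by linarith) (Real.rpow_nonneg hx.1 _))]
  nlinarith [Real.rpow_nonneg hx.1 (β - 1)]

noncomputable def holderRetraction (β : ℝ) (p : ℝ × ℝ) : ℝ × ℝ := (p.1, min p.2 (p.1 ^ β))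

lemma holderTriangle_subset (β : ℝ) : holderTriangle β ⊆ Icc 0 1 ×ˢ Ici 0 :=
  fun _ ⟨h0, h1, hy, _⟩ => ⟨⟨h0, h1⟩, hy⟩

lemma mapsTo_holderRetraction (β : ℝ) :
    MapsTo (holderRetraction β) (Icc 0 1 ×ˢ Ici 0) (holderTriangle β) :=
  fun _ ⟨⟨h0, h1⟩, hy⟩ => ⟨h0, h1, le_min hy (Real.rpow_nonneg h0 β), min_le_right _ _⟩

lemma eqOn_holderRetraction (β : ℝ) : EqOn (holderRetraction β) id (holderTriangle β) :=
  fun _ ⟨_, _, _, hy⟩ => Prod.ext rfl (min_eq_left hy)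

lemma lipschitzOnWith_holderRetraction {β : ℝ} (hβ : 1 ≤ β) :
    LipschitzOnWith β.toNNReal (holderRetraction β) (Icc 0 1 ×ˢ Ici 0) := by
  have hfst : LipschitzOnWith 1 Prod.fst (Icc (0 : ℝ) 1 ×ˢ Ici (0 : ℝ)) :=
    LipschitzWith.prod_fst.lipschitzOnWith
  have hpow : LipschitzOnWith β.toNNReal (fun p : ℝ × ℝ => p.1 ^ β) (Icc 0 1 ×ˢ Ici 0) := by
    simpa only [mul_one, Function.comp_def] using
      (lipschitzOnWith_rpow_Icc_zero_one hβ).comp hfst fun _ hp => hp.1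
  have hmin := lipschitzWith_min.comp_lipschitzOnWith
    (LipschitzWith.prod_snd.lipschitzOnWith.prodMk hpow)
  have hone : (1 : ℝ≥0) ≤ β.toNNReal := by simpa using hβ
  change LipschitzOnWith _ (fun p : ℝ × ℝ => (p.1, min p.2 (p.1 ^ β))) _
  simpa [max_eq_right hone] using hfst.prodMk hmin

/-- For `β ≥ 1`, the standard β-Hölder triangle is Lipschitz normally embedded:
there is `C ≥ 1` such that the inner distance between any two of its points is at most
`C` times their Euclidean distance. -/
theorem stmt8 (β : ℝ) (hβ : 1 ≤ β) :
    ∃ C : ℝ, 1 ≤ C ∧ ∀ p ∈ holderTriangle β, ∀ q ∈ holderTriangle β,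
      innerDist (holderTriangle β) p q ≤ ENNReal.ofReal (C * dist p q) := by
  refine ⟨β, hβ, fun p hp q hq => ?_⟩
  rw [ENNReal.ofReal_mul (by linarith), ← edist_dist]
  exact innerDist_le_of_lipschitzOnWith_retraction ((convex_Icc 0 1).prod (convex_Ici 0))
    (holderTriangle_subset β) (lipschitzOnWith_holderRetraction hβ) (mapsTo_holderRetraction β)
    (eqOn_holderRetraction β) hp hq
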